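/- A word y ∈ {0,1}* belongs to ⋃_{x ∈ {0,1}*} (x ∐ x^R) if and only if y is an abelian square. -/

import Mathlib

/-! If `y ∈ x ∐ xᴿ` and `n = |x|`, cut `x = x₁x₂` where the prefix of length `n` of `y` stops
reading `x`. That prefix is then a shuffle of `x₁` and `x₂ᴿ`, and the suffix a shuffle of `x₂` and
`x₁ᴿ`, so the two halves of `y` are anagrams of each other (over any alphabet).
Conversely, if `uv` is a binary abelian square with `a` zeros and `b` ones in each half, then
`u ∈ 0ᵃ ∐ 1ᵇ` and `v ∈ 1ᵇ ∐ 0ᵃ`, hence `uv ∈ x ∐ xᴿ` for `x = 0ᵃ1ᵇ`. -/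

/-- `IsShuffle x y z` means `z` is an interleaving of `x` and `y`, preserving
the relative order of the letters of each; i.e. `z ∈ x ∐ y` (ordinary shuffle). -/
inductive IsShuffle {α : Type*} : List α → List α → List α → Prop
  | nil : IsShuffle [] [] []
  | left {x y z : List α} (a : α) : IsShuffle x y z → IsShuffle (a :: x) y (a :: z)
  | right {x y z : List α} (a : α) : IsShuffle x y z → IsShuffle x (a :: y) (a :: z)

namespace IsShuffle

variable {α : Type*} {x y z : List α}

theorem perm_append (h : IsShuffle x y z) : z.Perm (x ++ y) := by
  induction h with
  | nil => exact .nil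
  | left a _ ih => exact ih.cons a
  | right a _ ih => exact (ih.cons a).trans List.perm_middle.symm

theorem length_eq (h : IsShuffle x y z) : z.length = x.length + y.length := by
  simpa using h.perm_append.length_eq

theorem symm (h : IsShuffle x y z) : IsShuffle y x z := by
  induction h with
  | nil => exact .nil
  | left a _ ih => exact .right a ih
  | right a _ ih => exact .left a ih

theorem append {x' y' z' : List α} (h : IsShuffle x y z) (h' : IsShuffle x' y' z') :
    IsShuffle (x ++ x') (y ++ y') (z ++ z') := by
  induction h with
  | nil => exact h'
  | left a _ ih => exact .left a ih
  | right a _ ih => exact .right a ih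

theorem exists_take_drop (h : IsShuffle x y z) (n : ℕ) :
    ∃ x₁ x₂ y₁ y₂, x = x₁ ++ x₂ ∧ y = y₁ ++ y₂ ∧
      IsShuffle x₁ y₁ (z.take n) ∧ IsShuffle x₂ y₂ (z.drop n) := by
  induction h generalizing n with
  | nil => exact ⟨[], [], [], [], rfl, rfl, by simpa using nil, by simpa using nil⟩
  | @left x y z a h ih =>
    cases n with
    | zero => exact ⟨[], a :: x, [], y, rfl, rfl, nil, .left a h⟩
    | succ n =>
      obtain ⟨x₁, x₂, y₁, y₂, rfl, rfl, h₁, h₂⟩ := ih n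
      exact ⟨a :: x₁, x₂, y₁, y₂, rfl, rfl, .left a h₁, h₂⟩
  | @right x y z a h ih =>
    cases n with
    | zero => exact ⟨[], x, [], a :: y, rfl, rfl, nil, .right a h⟩
    | succ n =>
      obtain ⟨x₁, x₂, y₁, y₂, rfl, rfl, h₁, h₂⟩ := ih n
      exact ⟨x₁, x₂, a :: y₁, y₂, rfl, rfl, .right a h₁, h₂⟩

theorem take_length_perm_drop_length (h : IsShuffle x x.reverse z) :
    (z.take x.length).Perm (z.drop x.length) := by
  obtain ⟨x₁, x₂, y₁, y₂, rfl, hy, h₁, h₂⟩ := h.exists_take_drop x.length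
  have hy₁ : y₁.length = x₂.length := by
    have := h₁.length_eq
    simp only [List.length_take, h.length_eq, List.length_append, List.length_reverse] at this
    omega
  rw [List.reverse_append] at hy
  obtain ⟨rfl, rfl⟩ := List.append_inj hy.symm (by simpa using hy₁)
  have hmid : (x₁ ++ x₂.reverse).Perm (x₂ ++ x₁.reverse) := by
    simpa using List.reverse_perm (x₂ ++ x₁.reverse)
  exact h₁.perm_append.trans (hmid.trans h₂.perm_append.symm)

end IsShuffle

theorem isShuffle_filter {α : Type*} (p : α → Bool) (z : List α) :
    IsShuffle (z.filter p) (z.filter fun a => !p a) z := by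
  induction z with
  | nil => exact .nil
  | cons a z ih =>
    cases hp : p a
    · simpa [List.filter_cons, hp] using IsShuffle.right a ih
    · simpa [List.filter_cons, hp] using IsShuffle.left a ih

theorem isShuffle_replicate_count_zero_count_one (u : List (Fin 2)) :
    IsShuffle (List.replicate (u.count 0) 0) (List.replicate (u.count 1) 1) u := by
  have hne : ∀ a ∈ u, (!(a == 0)) = (a == 1) := by
    intro a _
    fin_cases a <;> rfl
  simpa only [List.filter_beq, List.filter_congr hne] using isShuffle_filter (· == 0) u

/-- A binary word is an interleaving of some word with its reverse iff it is an
abelian square (y = uv with |u| = |v| and u, v having equally many 0's). -/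
theorem shuffle_reverse_iff_abelianSquare (y : List (Fin 2)) :
    (∃ x : List (Fin 2), IsShuffle x x.reverse y) ↔
      ∃ u v : List (Fin 2), y = u ++ v ∧ u.length = v.length ∧
        u.count 0 = v.count 0 := by
  constructor
  · rintro ⟨x, h⟩
    have hy : y.length = x.length + x.length := by simpa using h.length_eq
    refine ⟨y.take x.length, y.drop x.length, (List.take_append_drop _ y).symm, ?_,
      h.take_length_perm_drop_length.count_eq 0⟩
    simp [hy]
  · rintro ⟨u, v, rfl, hlen, hcount⟩
    have hu := isShuffle_replicate_count_zero_count_one u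
    have hv := isShuffle_replicate_count_zero_count_one v
    have hcount₁ : u.count 1 = v.count 1 := by
      have := hu.length_eq
      have := hv.length_eq
      simp only [List.length_replicate] at *
      omega
    refine ⟨List.replicate (u.count 0) 0 ++ List.replicate (u.count 1) 1, ?_⟩
    rw [List.reverse_append, List.reverse_replicate, List.reverse_replicate]
    rw [hcount, hcount₁] at hu ⊢
    exact hu.append hv.symm
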